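/- arXiv:1808.10213 — 3 statements merged into one kernel-verified Lean document; each statement's English description precedes it below -/
import Mathlib

section
/- The deterministic flow φ_t(x,y) defined piecewise by φ_t(x,y) = (x, h(t,x,y)) for t ≤ τ(x,y) and φ_t(x,y) = (e^{τ(x,y)−t} x, 0) for t ≥ τ(x,y) satisfies the semigroup (cocycle) property φ_{t+s}(x,y) = φ_t(φ_s(x,y)) for all s,t ≥ 0, where h(t,x,y) = (y−c(x))e^t + c(x), c(x) = 1 + min(dist(x,Γ),1), Γ = {−3,−1,1,3}, and τ(x,y) = inf{s ≥ 0 : h(s,x,y) = 0}. -/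
noncomputable section

/-- `Γ = {−3,−1,1,3}`. -/
def Gam : Set ℝ := {-3, -1, 1, 3}

/-- `c(x) = 1 + min(dist(x,Γ), 1)`. -/
noncomputable def c (x : ℝ) : ℝ := 1 + min (Metric.infDist x Gam) 1

/-- The explicit solution `h(t,x,y) = (y − c(x)) eᵗ + c(x)`. -/
noncomputable def hh (t x y : ℝ) : ℝ := (y - c x) * Real.exp t + c x

/-- Hitting time of 0. -/
noncomputable def tau (x y : ℝ) : ℝ := sInf {s : ℝ | 0 ≤ s ∧ hh s x y = 0}

/-- The deterministic flow on `E = ℝ × [0,1]`: for `t ≤ τ(x,y)` (equivalently,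
while `h(t,x,y) ≥ 0`, since `h(·,x,y)` is nonincreasing for `y ∈ [0,1]`) it is
`(x, h(t,x,y))`, and for `t ≥ τ(x,y)` it is `(x e^{τ(x,y)−t}, 0)`. -/
noncomputable def phi (t : ℝ) (p : ℝ × ℝ) : ℝ × ℝ :=
  if 0 ≤ hh t p.1 p.2 then (p.1, hh t p.1 p.2)
  else (p.1 * Real.exp (tau p.1 p.2 - t), 0)

/-! The vertical motion `y ↦ h(t,x,y)` is the flow of `ẏ = y − c(x)`; it fixes `c(x) > 0` and
pushes every `y < c(x)` down through `0` exactly once, at time `τ = log (c / (c − y))`.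
So `h(t, x, h(s,x,y)) = h(t+s,x,y)`, and the hitting time shifts as
`τ(x, h(s,x,y)) = τ(x,y) − s`. Once on the axis `y = 0` a point moves as `x ↦ x e^{−t}`,
so the two regimes glue together. -/

open Real

variable {s t u x y : ℝ}

lemma c_pos (x : ℝ) : 0 < c x := by
  unfold c
  linarith [le_min Metric.infDist_nonneg zero_le_one (a := Metric.infDist x Gam)]

lemma hh_zero_time (x y : ℝ) : hh 0 x y = y := by
  simp [hh]

lemma hh_hh (s t x y : ℝ) : hh t x (hh s x y) = hh (t + s) x y := by
  simp only [hh, exp_add]; ring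

lemma c_sub_hh (s x y : ℝ) : c x - hh s x y = (c x - y) * exp s := by
  unfold hh; ring

lemma lt_c_of_hh_neg (h : hh t x y < 0) : y < c x := by
  by_contra! hy
  unfold hh at h
  nlinarith [exp_pos t, c_pos x]

lemma hh_neg_of_le (h : hh s x y < 0) (hsu : s ≤ u) : hh u x y < 0 := by
  have hy := lt_c_of_hh_neg h
  have hexp : exp s ≤ exp u := exp_le_exp.mpr hsu
  unfold hh at h ⊢
  nlinarith

lemma hh_lt_c (s : ℝ) (hy : y < c x) : hh s x y < c x := by
  have := c_sub_hh s x y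
  nlinarith [exp_pos s]

lemma hh_eq_zero_iff (hy : y < c x) : hh s x y = 0 ↔ exp s = c x / (c x - y) := by
  rw [eq_div_iff (sub_pos.mpr hy).ne', mul_comm, ← c_sub_hh]
  constructor <;> intro h <;> linarith

lemma tau_eq_log (hy0 : 0 ≤ y) (hy : y < c x) : tau x y = log (c x / (c x - y)) := by
  have hratio : 1 ≤ c x / (c x - y) := (one_le_div (sub_pos.mpr hy)).mpr (by linarith)
  have hset : {s : ℝ | 0 ≤ s ∧ hh s x y = 0} = {log (c x / (c x - y))} := by
    ext s
    rw [Set.mem_ofPred_eq, Set.mem_singleton_iff, hh_eq_zero_iff hy]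
    constructor
    · rintro ⟨-, h⟩
      rw [← h, log_exp]
    · rintro rfl
      exact ⟨log_nonneg hratio, exp_log (by linarith)⟩
  rw [tau, hset, csInf_singleton]

lemma tau_hh (hs : 0 ≤ hh s x y) (hy0 : 0 ≤ y) (hy : y < c x) :
    tau x (hh s x y) = tau x y - s := by
  rw [tau_eq_log hs (hh_lt_c s hy), tau_eq_log hy0 hy, c_sub_hh, ← div_div,
    log_div (div_pos (c_pos x) (sub_pos.mpr hy)).ne' (exp_pos s).ne', log_exp]

lemma tau_zero (x : ℝ) : tau x 0 = 0 := by
  rw [tau_eq_log le_rfl (c_pos x), sub_zero, div_self (c_pos x).ne', log_one]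

lemma phi_of_nonneg (h : 0 ≤ hh t x y) : phi t (x, y) = (x, hh t x y) :=
  if_pos h

lemma phi_of_neg (h : hh t x y < 0) : phi t (x, y) = (x * exp (tau x y - t), 0) :=
  if_neg h.not_ge

lemma phi_zero_time (hy : 0 ≤ y) : phi 0 (x, y) = (x, y) := by
  rw [phi_of_nonneg (by rwa [hh_zero_time]), hh_zero_time]

lemma phi_axis (ht : 0 ≤ t) : phi t (x, 0) = (x * exp (-t), 0) := by
  rcases ht.eq_or_lt with rfl | ht
  · simpa using phi_zero_time (x := x) le_rfl
  · have hneg : hh t x 0 < 0 := by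
      have := c_sub_hh t x 0
      nlinarith [add_one_lt_exp ht.ne', c_pos x]
    rw [phi_of_neg hneg, tau_zero, zero_sub]

/-- the flow property: `φ₀ = id` on `E` and
`φ_{t+s}(x,y) = φ_t(φ_s(x,y))` for all `s,t ≥ 0` and `(x,y) ∈ E = ℝ × [0,1]`. -/
theorem flow_property :
    (∀ p : ℝ × ℝ, p.2 ∈ Set.Icc (0:ℝ) 1 → phi 0 p = p) ∧
    (∀ s t : ℝ, 0 ≤ s → 0 ≤ t → ∀ p : ℝ × ℝ, p.2 ∈ Set.Icc (0:ℝ) 1 →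
      phi (t + s) p = phi t (phi s p)) := by
  refine ⟨fun ⟨x, y⟩ hy => phi_zero_time hy.1, fun s t _ ht ⟨x, y⟩ hy => ?_⟩
  rcases le_or_gt 0 (hh s x y) with hs | hs
  · rw [phi_of_nonneg hs]
    rcases le_or_gt 0 (hh (t + s) x y) with hts | hts
    · rw [phi_of_nonneg hts, phi_of_nonneg (by rwa [hh_hh]), hh_hh]
    · rw [phi_of_neg hts, phi_of_neg (by rwa [hh_hh]),
        tau_hh hs hy.1 (lt_c_of_hh_neg hts), sub_sub, add_comm]
  · rw [phi_of_neg hs, phi_of_neg (hh_neg_of_le hs (by linarith)), phi_axis ht,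
      mul_assoc, ← exp_add]
    ring_nf
end
end

section
/- For the deterministic flow φ_t on E = ℝ × [0,1] (with the noise set to zero), every initial point (x,y) with ¬(y = 1 and x ∈ Γ) satisfies φ_t(x,y) → (0,0) in the Euclidean metric as t → ∞; and for γ ∈ Γ, φ_t(γ,1) = (γ,1) for all t ≥ 0. -/
noncomputable section

/-! For `y < c(x)` the height `h(t,x,y) = (y − c(x))eᵗ + c(x)` tends to `−∞`, so the flow
eventually follows the branch `(x e^{τ−t}, 0)`, which decays to the origin whatever `τ` is.
The line `y = c(x)` is invariant under `h`, and on `Γ` it passes through height `c = 1`. -/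

open Filter Topology Real

theorem tendsto_mul_exp_add_atBot {a : ℝ} (ha : a < 0) (b : ℝ) :
    Tendsto (fun t => a * exp t + b) atTop atBot :=
  tendsto_atBot_add_const_right _ b (tendsto_exp_atTop.const_mul_atTop_of_neg ha)

theorem tendsto_mul_exp_sub_nhds_zero (x a : ℝ) :
    Tendsto (fun t => x * exp (a - t)) atTop (𝓝 0) := by
  have hexp : Tendsto (fun t => exp (a - t)) atTop (𝓝 0) :=
    tendsto_exp_atBot.comp (tendsto_atBot_add_const_left _ a tendsto_neg_atTop_atBot)
  simpa using hexp.const_mul x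

theorem tendsto_hh_atBot {x y : ℝ} (hy : y < c x) :
    Tendsto (fun t => hh t x y) atTop atBot :=
  tendsto_mul_exp_add_atBot (sub_neg.mpr hy) (c x)

theorem phi_of_hh_neg {t x y : ℝ} (h : hh t x y < 0) :
    phi t (x, y) = (x * exp (tau x y - t), 0) :=
  if_neg h.not_ge

theorem tendsto_phi_zero {x y : ℝ} (hy : y < c x) :
    Tendsto (fun t => phi t (x, y)) atTop (𝓝 (0, 0)) := by
  have htail : Tendsto (fun t => (x * exp (tau x y - t), (0 : ℝ))) atTop (𝓝 (0, 0)) :=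
    (tendsto_mul_exp_sub_nhds_zero x _).prodMk_nhds tendsto_const_nhds
  refine htail.congr' ?_
  filter_upwards [(tendsto_hh_atBot hy).eventually_lt_atBot 0] with t ht
  exact (phi_of_hh_neg ht).symm

theorem hh_self (t x : ℝ) : hh t x (c x) = c x := by
  simp [hh]

theorem one_le_c (x : ℝ) : 1 ≤ c x :=
  le_add_of_nonneg_right (le_min Metric.infDist_nonneg zero_le_one)

theorem phi_self (t x : ℝ) : phi t (x, c x) = (x, c x) := by
  have h : 0 ≤ c x := zero_le_one.trans (one_le_c x)
  simp only [phi, hh_self, if_pos h]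

theorem c_eq_one_of_mem {γ : ℝ} (hγ : γ ∈ Gam) : c γ = 1 := by
  simp [c, Metric.infDist_zero_of_mem hγ]

/-- (a) every point `(x,y) ∈ E` with `c(x) > y` (i.e. not of the form
`(γ,1)`, `γ ∈ Γ`) satisfies `φ_t(x,y) → (0,0)` as `t → ∞` (Euclidean topology);
(b) the points `(γ,1)`, `γ ∈ Γ`, are fixed points of the flow. -/
theorem convergence_and_fixed_points :
    (∀ x y : ℝ, y ∈ Set.Icc (0:ℝ) 1 → y < c x →
      Filter.Tendsto (fun t => phi t (x, y)) Filter.atTop (nhds ((0:ℝ), (0:ℝ)))) ∧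
    (∀ γ ∈ Gam, ∀ t : ℝ, 0 ≤ t → phi t (γ, 1) = (γ, 1)) := by
  refine ⟨fun x y _ hy => tendsto_phi_zero hy, fun γ hγ t _ => ?_⟩
  simpa only [c_eq_one_of_mem hγ] using phi_self t γ
end
end

section
/- For the flow φ_t on E = ℝ × [0,1] and any two initial points on the x-axis, the ρ-distance between their trajectories can tend to infinity: if x ≠ x', then for trajectories x(t) = x e^{−t} + f(t), x'(t) = x' e^{−t} + f(t) along any continuous f with limsup_{t→∞} f(t) = ∞ and H(u) = exp(exp(exp(u))) for large u, we have limsup_{t→∞} |H(x(t)) − H(x'(t))| = ∞. -/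
/-! Along the times where `f t ≥ α √(log t)`, the lower trajectory `x' e^{-t} + f t` (say `x' < x`)
lies above `α √(log t) - |x'|`, where `H` is a triple exponential whose slope is at least
`exp (exp (exp (α √(log t) - |x'|)))`. Since `exp (α √(log t) - |x'|) ≥ 2 log t` eventually, that
slope is at least `exp (t ^ 2)`, which beats the factor `e^{-t}` by which the trajectories approach
each other. -/

open Filter Real

theorem sub_mul_exp_le_exp_sub (x y : ℝ) : (x - y) * exp y ≤ exp x - exp y := by
  have h := mul_le_mul_of_nonneg_right (add_one_le_exp (x - y)) (exp_pos y).le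
  rw [← exp_add, sub_add_cancel] at h
  linarith

theorem sub_le_exp_sub_exp {x y : ℝ} (hy : 0 ≤ y) (hyx : y ≤ x) : x - y ≤ exp x - exp y :=
  calc x - y ≤ (x - y) * exp y := le_mul_of_one_le_right (sub_nonneg.2 hyx) (one_le_exp hy)
    _ ≤ exp x - exp y := sub_mul_exp_le_exp_sub x y

theorem sub_mul_exp_exp_exp_le {a b : ℝ} (hb : 0 ≤ b) (hba : b ≤ a) :
    (a - b) * exp (exp (exp b)) ≤ exp (exp (exp a)) - exp (exp (exp b)) :=
  calc (a - b) * exp (exp (exp b)) ≤ (exp (exp a) - exp (exp b)) * exp (exp (exp b)) := by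
        refine mul_le_mul_of_nonneg_right ?_ (exp_pos _).le
        calc a - b ≤ exp a - exp b := sub_le_exp_sub_exp hb hba
          _ ≤ exp (exp a) - exp (exp b) :=
            sub_le_exp_sub_exp (exp_pos b).le (exp_le_exp.2 hba)
    _ ≤ exp (exp (exp a)) - exp (exp (exp b)) := sub_mul_exp_le_exp_sub _ _

theorem eventually_two_mul_log_le_exp_mul_sqrt_log_sub {α : ℝ} (hα : 0 < α) (m : ℝ) :
    ∀ᶠ t in atTop, 2 * log t ≤ exp (α * √(log t) - m) := by
  have hu : Tendsto (fun t => √(log t)) atTop atTop := tendsto_sqrt_atTop.comp tendsto_log_atTop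
  have hgrowth := (tendsto_exp_mul_div_rpow_atTop 2 α hα).eventually_ge_atTop (2 * exp m)
  filter_upwards [hu.eventually hgrowth, hu.eventually_gt_atTop 0,
    tendsto_log_atTop.eventually_ge_atTop 0] with t ht hpos hlog
  rw [rpow_two, le_div_iff₀ (by positivity), sq_sqrt hlog] at ht
  rw [exp_sub, le_div_iff₀ (exp_pos m)]
  linarith

theorem tendsto_exp_neg_mul_exp_exp_exp {g : ℝ → ℝ} (hg : ∀ᶠ t in atTop, 2 * log t ≤ exp (g t)) :
    Tendsto (fun t => exp (-t) * exp (exp (exp (g t)))) atTop atTop := by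
  refine tendsto_atTop_mono' _ ?_ tendsto_id
  filter_upwards [hg, eventually_gt_atTop 0] with t hgt ht
  have hsq : t ^ 2 ≤ exp (exp (g t)) := by
    calc t ^ 2 = exp (2 * log t) := by rw [← log_rpow ht, exp_log (by positivity), rpow_two]
      _ ≤ exp (exp (g t)) := exp_le_exp.2 hgt
  calc t ≤ (t ^ 2 - t) + 1 := by nlinarith [sq_nonneg (t - 1)]
    _ ≤ exp (t ^ 2 - t) := add_one_le_exp _
    _ ≤ exp (-t) * exp (exp (exp (g t))) := by
      rw [← exp_add, neg_add_eq_sub]; gcongr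

theorem frequently_lt_sub_of_lt {H : ℝ → ℝ} {M : ℝ}
    (hH : ∀ u : ℝ, M ≤ u → H u = exp (exp (exp u))) {f : ℝ → ℝ} {α : ℝ} (hα : 0 < α)
    (hf : ∃ᶠ t in atTop, α * √(log t) ≤ f t) {x x' : ℝ} (hlt : x' < x) (C : ℝ) :
    ∃ᶠ t in atTop, C < H (x * exp (-t) + f t) - H (x' * exp (-t) + f t) := by
  have hfloor : Tendsto (fun t => α * √(log t) - |x'|) atTop atTop :=
    tendsto_atTop_add_const_right _ _
      ((tendsto_sqrt_atTop.comp tendsto_log_atTop).const_mul_atTop hα)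
  have hgap :=
    tendsto_exp_neg_mul_exp_exp_exp (eventually_two_mul_log_le_exp_mul_sqrt_log_sub hα |x'|)
  refine (hf.and_eventually ((hgap.eventually_gt_atTop (C / (x - x'))).and
    ((hfloor.eventually_ge_atTop (max M 0)).and (eventually_ge_atTop 0)))).mono ?_
  rintro t ⟨hft, hC, hfloor_t, ht⟩
  set a := x * exp (-t) + f t
  set b := x' * exp (-t) + f t
  have hdiff : a - b = (x - x') * exp (-t) := by ring
  have hb : α * √(log t) - |x'| ≤ b := by
    have : |x' * exp (-t)| ≤ |x'| := by
      rw [abs_mul, abs_of_pos (exp_pos _)]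
      exact mul_le_of_le_one_right (abs_nonneg _) (exp_le_one_iff.2 (by linarith))
    linarith [neg_abs_le (x' * exp (-t))]
  have hMb : max M 0 ≤ b := hfloor_t.trans hb
  have hba : b ≤ a := by have := exp_pos (-t); dsimp only [a, b]; nlinarith
  calc C < (x - x') * (exp (-t) * exp (exp (exp (α * √(log t) - |x'|)))) := by
        rwa [div_lt_iff₀' (sub_pos.2 hlt)] at hC
    _ ≤ (x - x') * exp (-t) * exp (exp (exp b)) := by
        rw [mul_assoc]; gcongr
    _ ≤ H a - H b := by
        rw [← hdiff, hH a ((le_max_left M 0).trans (hMb.trans hba)),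
          hH b ((le_max_left M 0).trans hMb)]
        exact sub_mul_exp_exp_exp_le ((le_max_right M 0).trans hMb) hba

theorem trajectories_rho_distance_unbounded_general (H : ℝ → ℝ) (M : ℝ)
    (hH : ∀ u : ℝ, M ≤ u → H u = Real.exp (Real.exp (Real.exp u)))
    (f : ℝ → ℝ)
    (hgrow : ∃ α : ℝ, 0 < α ∧ ∃ᶠ t in atTop, α * Real.sqrt (Real.log t) ≤ f t)
    (x x' : ℝ) (hxx : x ≠ x') :
    ∀ C : ℝ, ∃ᶠ t in atTop,
      C < |H (x * Real.exp (-t) + f t) - H (x' * Real.exp (-t) + f t)| := by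
  intro C
  obtain ⟨α, hα, hf⟩ := hgrow
  rcases hxx.lt_or_gt with hlt | hgt
  · refine (frequently_lt_sub_of_lt hH hα hf hlt C).mono fun t ht => ?_
    rw [abs_sub_comm]
    exact ht.trans_le (le_abs_self _)
  · exact (frequently_lt_sub_of_lt hH hα hf hgt C).mono fun t ht => ht.trans_le (le_abs_self _)

/-- two distinct trajectories on the axis, `x(t) = x e^{−t} + f(t)`
and `x'(t) = x' e^{−t} + f(t)` with `x ≠ x'`, driven by a continuous `f` whose
limsup compares to `√(log t)` (frequently `f(t) ≥ α √(log t)` for some `α > 0`),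
become infinitely far apart in the metric `ρ`: for `H` strictly increasing,
continuous, with `H(u) = exp(exp(exp u))` for `u ≥ M`, we have
`limsup_{t→∞} |H(x(t)) − H(x'(t))| = ∞`. -/
theorem trajectories_rho_distance_unbounded (H : ℝ → ℝ) (M : ℝ)
    (hmono : StrictMono H) (hcont : Continuous H)
    (hH : ∀ u : ℝ, M ≤ u → H u = Real.exp (Real.exp (Real.exp u)))
    (f : ℝ → ℝ) (hf : Continuous f)
    (hgrow : ∃ α : ℝ, 0 < α ∧ ∃ᶠ t in atTop, α * Real.sqrt (Real.log t) ≤ f t)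
    (x x' : ℝ) (hxx : x ≠ x') :
    ∀ C : ℝ, ∃ᶠ t in atTop,
      C < |H (x * Real.exp (-t) + f t) - H (x' * Real.exp (-t) + f t)| :=
  trajectories_rho_distance_unbounded_general H M hH f hgrow x x' hxx
end
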